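/- arXiv:2102.05261 — 4 statements merged into one kernel-verified Lean document; each statement's English description precedes it below -/
import Mathlib

section
/- For all positive real numbers a and b with b > a, the infinite series identity a/(b-a) = \sum_{i=1}^{\infty} \prod_{j=1}^{i} (a+j-1)/(b+j) holds. -/
/-!
Write `r(a, b, n) = ∏_{j<n} (a+j)/(b+j)`. The `i`-th term of the series is `r(a, b+1, i)`, and
`(b - a) r(a, b+1, n) = b (r(a, b, n) - r(a, b, n+1))`, so the series telescopes to
`b/(b-a) · r(a, b, 1) = a/(b-a)`, provided `r(a, b, n) → 0`. The latter holds because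
`(a+j)/(b+j) = 1 - (b-a)/(b+j) ≤ exp(-(b-a)/(b+j))` and the harmonic-type series
`∑ 1/(b+j)` diverges.
-/

open Finset Filter Topology

theorem Finset.prod_Icc_one_eq_prod_range {M : Type*} [CommMonoid M] (f : ℕ → M) (n : ℕ) :
    ∏ j ∈ Icc 1 n, f j = ∏ j ∈ range n, f (j + 1) := by
  rw [range_eq_Ico, prod_Ico_add', zero_add, Ico_add_one_right_eq_Icc]

theorem Antitone.hasSum_sub_succ {f : ℕ → ℝ} {l : ℝ} (hf : Antitone f)
    (hl : Tendsto f atTop (𝓝 l)) : HasSum (fun n ↦ f n - f (n + 1)) (f 0 - l) := by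
  rw [hasSum_iff_tendsto_nat_of_nonneg fun n ↦ sub_nonneg.mpr (hf n.le_succ)]
  simp_rw [sum_range_sub']
  exact tendsto_const_nhds.sub hl

theorem tendsto_prod_range_one_sub_of_not_summable {c : ℕ → ℝ} (hc₀ : ∀ n, 0 ≤ c n)
    (hc₁ : ∀ n, c n ≤ 1) (hc : ¬Summable c) :
    Tendsto (fun n ↦ ∏ j ∈ range n, (1 - c j)) atTop (𝓝 0) := by
  have hsum : Tendsto (fun n ↦ ∑ j ∈ range n, c j) atTop atTop :=
    (not_summable_iff_tendsto_nat_atTop_of_nonneg hc₀).mp hc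
  refine squeeze_zero (fun n ↦ prod_nonneg fun j _ ↦ sub_nonneg.mpr (hc₁ j)) (fun n ↦ ?_)
    (Real.tendsto_exp_atBot.comp (tendsto_neg_atTop_atBot.comp hsum))
  calc ∏ j ∈ range n, (1 - c j)
      ≤ ∏ j ∈ range n, Real.exp (-c j) :=
        prod_le_prod (fun j _ ↦ sub_nonneg.mpr (hc₁ j))
          fun j _ ↦ by linarith [Real.add_one_le_exp (-c j)]
    _ = Real.exp (-∑ j ∈ range n, c j) := by rw [← Real.exp_sum, sum_neg_distrib]

noncomputable def pochhammerRatio (a b : ℝ) (n : ℕ) : ℝ := ∏ j ∈ range n, (a + j) / (b + j)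

namespace pochhammerRatio

variable {a b : ℝ}

theorem succ (n : ℕ) :
    pochhammerRatio a b (n + 1) = pochhammerRatio a b n * ((a + n) / (b + n)) :=
  prod_range_succ _ n

theorem add_one_right_mul (hb : 0 < b) (n : ℕ) :
    pochhammerRatio a (b + 1) n * (b + n) = b * pochhammerRatio a b n := by
  induction n with
  | zero => simp [pochhammerRatio]
  | succ n ih =>
    have : b + n ≠ 0 := by positivity
    rw [succ, succ]
    push_cast
    field_simp
    linear_combination (a + n) * (b + n + 1) * ih

theorem sub_mul_add_one_right (hb : 0 < b) (n : ℕ) :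
    (b - a) * pochhammerRatio a (b + 1) n =
      b * (pochhammerRatio a b n - pochhammerRatio a b (n + 1)) := by
  have : b + n ≠ 0 := by positivity
  rw [succ]
  field_simp
  linear_combination (b - a) * add_one_right_mul (a := a) hb n

theorem tendsto_zero (ha : 0 ≤ a) (hab : a < b) :
    Tendsto (pochhammerRatio a b) atTop (𝓝 0) := by
  have hb : 0 < b := ha.trans_lt hab
  have hfactor : ∀ j : ℕ, (a + j) / (b + j) = 1 - (b - a) / (b + j) := fun j ↦ by
    have : b + j ≠ 0 := by positivity
    field_simp
    ring
  have hdiv : ¬Summable fun j : ℕ ↦ (b - a) / (b + j) := by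
    have h := (Real.summable_one_div_nat_add_rpow b 1).not.mpr (lt_irrefl 1)
    simp only [Real.rpow_one] at h
    have heq : (fun j : ℕ ↦ (b - a) / (b + j)) = fun j : ℕ ↦ (b - a) * (1 / |(j : ℝ) + b|) := by
      funext j
      rw [abs_of_pos (by positivity), add_comm, mul_one_div]
    rwa [heq, summable_mul_left_iff (sub_pos.mpr hab).ne']
  have hprod : pochhammerRatio a b = fun n ↦ ∏ j ∈ range n, (1 - (b - a) / (b + j)) :=
    funext fun n ↦ prod_congr rfl fun j _ ↦ hfactor j
  rw [hprod]
  exact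
    tendsto_prod_range_one_sub_of_not_summable (fun j ↦ by positivity)
      (fun j ↦ (div_le_one (by positivity)).mpr (by linarith)) hdiv

theorem antitone (ha : 0 ≤ a) (hab : a < b) : Antitone (pochhammerRatio a b) := by
  have hb : 0 < b := ha.trans_lt hab
  refine antitone_nat_of_succ_le fun n ↦ ?_
  have hnonneg : 0 ≤ pochhammerRatio a b n := prod_nonneg fun j _ ↦ by positivity
  rw [succ]
  exact mul_le_of_le_one_right hnonneg ((div_le_one (by positivity)).mpr (by linarith))

theorem hasSum_add_one_right (ha : 0 ≤ a) (hab : a < b) :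
    HasSum (fun n ↦ pochhammerRatio a (b + 1) (n + 1)) (a / (b - a)) := by
  have hb : 0 < b := ha.trans_lt hab
  have hba : b - a ≠ 0 := (sub_pos.mpr hab).ne'
  have hterm : ∀ n, pochhammerRatio a (b + 1) n =
      b / (b - a) * (pochhammerRatio a b n - pochhammerRatio a b (n + 1)) := fun n ↦ by
    rw [div_mul_eq_mul_div, eq_div_iff hba, mul_comm, sub_mul_add_one_right hb]
  have htele := ((antitone ha hab).comp_monotone (add_left_mono (a := 1))).hasSum_sub_succ
    ((tendsto_zero ha hab).comp (tendsto_add_atTop_nat 1))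
  have hfirst : pochhammerRatio a b 1 = a / b := by simp [pochhammerRatio]
  simp only [Function.comp_apply, zero_add, hfirst, sub_zero] at htele
  rw [funext fun n ↦ hterm (n + 1), show a / (b - a) = b / (b - a) * (a / b) by field_simp]
  exact htele.mul_left _

end pochhammerRatio

/-- For all positive reals `a < b`,
`a/(b-a) = ∑_{i=1}^∞ ∏_{j=1}^i (a+j-1)/(b+j)`. -/
theorem stmt_0 (a b : ℝ) (ha : 0 < a) (hab : a < b) :
    a / (b - a) =
      ∑' i : ℕ, ∏ j ∈ Finset.Icc 1 (i + 1), (a + (j : ℝ) - 1) / (b + (j : ℝ)) := by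
  have hterm : ∀ i : ℕ, ∏ j ∈ Finset.Icc 1 (i + 1), (a + (j : ℝ) - 1) / (b + (j : ℝ)) =
      pochhammerRatio a (b + 1) (i + 1) := fun i ↦ by
    rw [prod_Icc_one_eq_prod_range]
    refine prod_congr rfl fun j _ ↦ ?_
    push_cast
    ring
  simp_rw [hterm]
  exact (pochhammerRatio.hasSum_add_one_right ha.le hab).tsum_eq.symm
end

section
/- Let H > 1 be a real number, define step sizes \alpha_\ell = (H+1)/(H+\ell) for \ell \geq 1, and for 1 \leq i \leq k define \alpha_k^i = \alpha_i \prod_{\ell=i+1}^{k} (1 - \alpha_\ell). Then for every i \geq 1, \sum_{k=i}^{\infty} \alpha_k^i = (H+1)/H. -/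
/-!
Write `Pₙ` for the product in the `n`-th term and `Rₙ = (i)ₙ / (H + i)ₙ`. Then
`(H + i + n) Pₙ = (H + i) Rₙ` and `Rₙ - Rₙ₊₁ = H / (H + i + n) · Rₙ`, so the `n`-th term equals
`(H + 1) / H · (Rₙ - Rₙ₊₁)` and the series telescopes to `(H + 1) / H · R₀ = (H + 1) / H`,
because `Rₙ₊₁ ≤ i / (i + n + 1) → 0` when `H ≥ 1`.
-/

open Finset Filter Topology

-- The ratio `(x)ₙ / (y)ₙ` of rising factorials.
noncomputable def risingRatio (x y : ℝ) (n : ℕ) : ℝ :=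
  ∏ m ∈ range n, (x + m) / (y + m)

namespace risingRatio

variable {x y : ℝ}

@[simp]
lemma zero (x y : ℝ) : risingRatio x y 0 = 1 := prod_range_zero _

lemma succ (x y : ℝ) (n : ℕ) :
    risingRatio x y (n + 1) = risingRatio x y n * ((x + n) / (y + n)) :=
  prod_range_succ _ _

lemma nonneg (hx : 0 ≤ x) (hxy : x ≤ y) (n : ℕ) : 0 ≤ risingRatio x y n :=
  prod_nonneg fun m _ ↦ div_nonneg (by positivity) (by linarith [m.cast_nonneg (α := ℝ)])

lemma sub_succ (hx : 0 ≤ x) (hxy : x < y) (n : ℕ) :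
    risingRatio x y n - risingRatio x y (n + 1) = (y - x) / (y + n) * risingRatio x y n := by
  have : 0 < y + n := by linarith [n.cast_nonneg (α := ℝ)]
  rw [succ]
  field_simp
  ring

lemma antitone (hx : 0 ≤ x) (hxy : x < y) : Antitone (risingRatio x y) :=
  antitone_nat_of_succ_le fun n ↦ sub_nonneg.mp <| by
    rw [sub_succ hx hxy]
    exact mul_nonneg (div_nonneg (by linarith) (by linarith [n.cast_nonneg (α := ℝ)]))
      (nonneg hx hxy.le n)

lemma succ_le (hx : 0 ≤ x) (hxy : x + 1 ≤ y) (n : ℕ) :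
    risingRatio x y (n + 1) ≤ x / (x + (n + 1)) := by
  induction n with
  | zero =>
    rw [succ, zero, one_mul, Nat.cast_zero, add_zero, add_zero, zero_add]
    exact div_le_div_of_nonneg_left hx (by positivity) hxy
  | succ n ih =>
    have hxn : 0 < x + (n + 1) := by positivity
    calc risingRatio x y (n + 1 + 1)
        ≤ x / (x + (n + 1)) * ((x + (n + 1)) / (y + (n + 1))) := by
          rw [succ, Nat.cast_succ]
          exact mul_le_mul_of_nonneg_right ih (div_nonneg hxn.le (by linarith))
      _ = x / (y + (n + 1)) := by field_simp [show y + (n + 1) ≠ 0 by linarith]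
      _ ≤ x / (x + ((n + 1 : ℕ) + 1)) := by
          refine div_le_div_of_nonneg_left hx (by positivity) ?_
          push_cast
          linarith

lemma tendsto_zero (hx : 0 ≤ x) (hxy : x + 1 ≤ y) :
    Tendsto (risingRatio x y) atTop (𝓝 0) := by
  rw [← tendsto_add_atTop_iff_nat 1]
  have hbound : Tendsto (fun n : ℕ ↦ x / (x + (n + 1))) atTop (𝓝 0) :=
    tendsto_const_nhds.div_atTop <| tendsto_atTop_add_const_left _ _ <|
      tendsto_atTop_add_const_right _ _ tendsto_natCast_atTop_atTop
  exact squeeze_zero (fun n ↦ nonneg hx (by linarith) _) (succ_le hx hxy) hbound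

end risingRatio

lemma hasSum_sub_succ_of_antitone {B : ℕ → ℝ} (hB : Antitone B)
    (hlim : Tendsto B atTop (𝓝 0)) : HasSum (fun n ↦ B n - B (n + 1)) (B 0) := by
  rw [hasSum_iff_tendsto_nat_of_nonneg fun n ↦ sub_nonneg.mpr (hB n.le_succ)]
  simp only [sum_range_sub']
  simpa using tendsto_const_nhds.sub hlim

lemma prod_Icc_one_sub_div_mul {H : ℝ} (hH : 0 < H) (i n : ℕ) :
    (∏ ℓ ∈ Icc (i + 1) (i + n), (1 - (H + 1) / (H + ℓ))) * (H + i + n)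
      = (H + i) * risingRatio i (H + i) n := by
  induction n with
  | zero => simp
  | succ n ih =>
    have hn : 0 < H + i + n := by positivity
    rw [← add_assoc, prod_Icc_succ_top (by omega), risingRatio.succ, ← mul_assoc, ← ih]
    push_cast
    field_simp
    ring

lemma div_mul_prod_Icc_one_sub_div {H : ℝ} (hH : 0 < H) (i n : ℕ) :
    (H + 1) / (H + i) * ∏ ℓ ∈ Icc (i + 1) (i + n), (1 - (H + 1) / (H + ℓ))
      = (H + 1) / H * (risingRatio i (H + i) n - risingRatio i (H + i) (n + 1)) := by
  have hn : 0 < H + i + n := by positivity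
  rw [risingRatio.sub_succ i.cast_nonneg (by linarith), add_sub_cancel_right,
    ← mul_div_cancel_right₀ (∏ ℓ ∈ Icc (i + 1) (i + n), _) hn.ne', prod_Icc_one_sub_div_mul hH]
  field_simp

theorem stmt_3_general (H : ℝ) (hH : 1 < H) (i : ℕ) :
    ∑' n : ℕ,
        ((H + 1) / (H + (i : ℝ)) *
          ∏ ℓ ∈ Finset.Icc (i + 1) (i + n), (1 - (H + 1) / (H + (ℓ : ℝ))))
      = (H + 1) / H := by
  have hi : (0 : ℝ) ≤ i := i.cast_nonneg
  have hgap : (i : ℝ) + 1 ≤ H + i := by linarith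
  have hsum := (hasSum_sub_succ_of_antitone (risingRatio.antitone hi (by linarith))
    (risingRatio.tendsto_zero hi hgap)).mul_left ((H + 1) / H)
  simp only [risingRatio.zero, mul_one,
    ← div_mul_prod_Icc_one_sub_div (by linarith : 0 < H)] at hsum
  exact hsum.tsum_eq

/-- With `H > 1`, step sizes `α_ℓ = (H+1)/(H+ℓ)`, and
`α_k^i = α_i ∏_{ℓ=i+1}^k (1-α_ℓ)`, for every `i ≥ 1` we have
`∑_{k=i}^∞ α_k^i = (H+1)/H`. -/
theorem stmt_3 (H : ℝ) (hH : 1 < H) (i : ℕ) (hi : 1 ≤ i) :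
    ∑' n : ℕ,
        ((H + 1) / (H + (i : ℝ)) *
          ∏ ℓ ∈ Finset.Icc (i + 1) (i + n), (1 - (H + 1) / (H + (ℓ : ℝ))))
      = (H + 1) / H :=
  stmt_3_general H hH i
end

section
/- Let \gamma \in [0,1), let (r_\ell)_{\ell \geq 0} be a real sequence, and let \lambda and \tau \geq 0 be reals such that |\sum_{k=0}^{\ell} (r_k - \lambda)| \leq \tau for every \ell \geq 0. If additionally the sequence (r_\ell) is bounded so that the discounted sum converges, then |\sum_{\ell=0}^{\infty} \gamma^{\ell} r_\ell - \lambda/(1-\gamma)| \leq \tau. -/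
/-!
Abel summation. With `S ℓ = ∑_{k ≤ ℓ} (r k - λ)`, the Cauchy product of `∑ γ^ℓ (r ℓ - λ)` with the
geometric series `∑ γ^ℓ = (1 - γ)⁻¹` gives `∑ γ^ℓ (r ℓ - λ) = (1 - γ) ∑ γ^ℓ S ℓ`, and `|S ℓ| ≤ τ`
bounds the right-hand side by `(1 - γ) · τ / (1 - γ) = τ`. Absolute convergence comes from
`|r ℓ - λ| ≤ 2τ`, since each term is a difference of two consecutive partial sums.
-/

open Finset

section Discounted

variable {𝕜 : Type*} [NormedField 𝕜] {γ : 𝕜}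

theorem summable_norm_pow_mul_of_norm_le (hγ : ‖γ‖ < 1) {x : ℕ → 𝕜} {C : ℝ}
    (hx : ∀ ℓ, ‖x ℓ‖ ≤ C) : Summable fun ℓ => ‖γ ^ ℓ * x ℓ‖ := by
  refine .of_nonneg_of_le (fun _ => norm_nonneg _) (fun ℓ => ?_)
    ((summable_geometric_of_lt_one (norm_nonneg γ) hγ).mul_right C)
  rw [norm_mul, norm_pow]
  exact mul_le_mul_of_nonneg_left (hx ℓ) (by positivity)

theorem one_sub_mul_tsum_pow_mul_sum_range_succ [CompleteSpace 𝕜] (hγ : ‖γ‖ < 1) {x : ℕ → 𝕜}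
    (hx : Summable fun ℓ => ‖γ ^ ℓ * x ℓ‖) :
    (1 - γ) * ∑' ℓ, γ ^ ℓ * ∑ k ∈ range (ℓ + 1), x k = ∑' ℓ, γ ^ ℓ * x ℓ := by
  have hγ1 : 1 - γ ≠ 0 := sub_ne_zero.2 fun h => by simp [← h] at hγ
  have hcauchy : (∑' ℓ, γ ^ ℓ * x ℓ) * ∑' ℓ, γ ^ ℓ
      = ∑' ℓ, γ ^ ℓ * ∑ k ∈ range (ℓ + 1), x k := by
    rw [tsum_mul_tsum_eq_tsum_sum_range_of_summable_norm hx
      (by simpa using summable_geometric_of_lt_one (norm_nonneg γ) hγ)]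
    refine tsum_congr fun ℓ => ?_
    rw [mul_sum]
    refine sum_congr rfl fun k hk => ?_
    rw [mul_right_comm, ← pow_add, Nat.add_sub_cancel' (Nat.lt_succ_iff.1 (mem_range.1 hk)),
      mul_comm]
  rw [← hcauchy, tsum_geometric_of_norm_lt_one hγ, mul_comm, mul_assoc, inv_mul_cancel₀ hγ1,
    mul_one]

end Discounted

theorem norm_le_two_mul_of_norm_sum_range_succ_le {E : Type*} [SeminormedAddCommGroup E]
    {x : ℕ → E} {τ : ℝ} (hS : ∀ ℓ, ‖∑ k ∈ range (ℓ + 1), x k‖ ≤ τ) (ℓ : ℕ) :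
    ‖x ℓ‖ ≤ 2 * τ := by
  cases ℓ with
  | zero =>
    have := hS 0
    rw [sum_range_one] at this
    linarith [norm_nonneg (x 0)]
  | succ n =>
    have hx : x (n + 1) = ∑ k ∈ range (n + 2), x k - ∑ k ∈ range (n + 1), x k := by
      rw [sum_range_succ _ (n + 1), add_sub_cancel_left]
    calc ‖x (n + 1)‖ ≤ ‖∑ k ∈ range (n + 2), x k‖ + ‖∑ k ∈ range (n + 1), x k‖ :=
          hx ▸ norm_sub_le _ _
      _ ≤ 2 * τ := by linarith [hS (n + 1), hS n]

theorem abs_tsum_pow_mul_le {γ : ℝ} (hγ0 : 0 ≤ γ) (hγ1 : γ < 1) {a : ℕ → ℝ} {τ : ℝ}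
    (ha : ∀ ℓ, |a ℓ| ≤ τ) : |∑' ℓ, γ ^ ℓ * a ℓ| ≤ τ / (1 - γ) := by
  refine tsum_of_norm_bounded (E := ℝ) (g := fun ℓ => γ ^ ℓ * τ) ?_ fun ℓ => ?_
  · simpa [div_eq_inv_mul] using (hasSum_geometric_of_lt_one hγ0 hγ1).mul_right τ
  · rw [Real.norm_eq_abs, abs_mul, abs_pow, abs_of_nonneg hγ0]
    exact mul_le_mul_of_nonneg_left (ha ℓ) (pow_nonneg hγ0 ℓ)

theorem stmt_5_general (γ : ℝ) (hγ0 : 0 ≤ γ) (hγ1 : γ < 1)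
    (r : ℕ → ℝ) (lam τ : ℝ)
    (hpartial : ∀ ℓ : ℕ, |∑ k ∈ Finset.range (ℓ + 1), (r k - lam)| ≤ τ) :
    |(∑' ℓ : ℕ, γ ^ ℓ * r ℓ) - lam / (1 - γ)| ≤ τ := by
  have hγ : ‖γ‖ < 1 := by rwa [Real.norm_eq_abs, abs_of_nonneg hγ0]
  have hx : Summable fun ℓ => ‖γ ^ ℓ * (r ℓ - lam)‖ :=
    summable_norm_pow_mul_of_norm_le hγ
      (norm_le_two_mul_of_norm_sum_range_succ_le (E := ℝ) hpartial)
  have hdev : (∑' ℓ, γ ^ ℓ * r ℓ) - lam / (1 - γ) = ∑' ℓ, γ ^ ℓ * (r ℓ - lam) := by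
    have hgeo : HasSum (fun ℓ => γ ^ ℓ * lam) (lam / (1 - γ)) := by
      simpa [div_eq_inv_mul] using (hasSum_geometric_of_lt_one hγ0 hγ1).mul_right lam
    rw [((hx.of_norm.hasSum.add hgeo).congr_fun fun ℓ => by ring).tsum_eq, add_sub_cancel_right]
  rw [hdev, ← one_sub_mul_tsum_pow_mul_sum_range_succ hγ hx, abs_mul,
    abs_of_pos (sub_pos.2 hγ1), ← le_div_iff₀' (sub_pos.2 hγ1)]
  exact abs_tsum_pow_mul_le hγ0 hγ1 hpartial

/-- If all partial sums of `r_k - λ` are bounded in magnitude by `τ`, and the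
sequence `r` is bounded, then the discounted sum deviates from `λ/(1-γ)` by at
most `τ`. -/
theorem stmt_5 (γ : ℝ) (hγ0 : 0 ≤ γ) (hγ1 : γ < 1)
    (r : ℕ → ℝ) (lam τ C : ℝ) (hτ : 0 ≤ τ)
    (hpartial : ∀ ℓ : ℕ, |∑ k ∈ Finset.range (ℓ + 1), (r k - lam)| ≤ τ)
    (hbdd : ∀ ℓ : ℕ, |r ℓ| ≤ C) :
    |(∑' ℓ : ℕ, γ ^ ℓ * r ℓ) - lam / (1 - γ)| ≤ τ :=
  stmt_5_general γ hγ0 hγ1 r lam τ hpartial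
end

section
/- Let a and S be positive integers, b \geq 0 an integer, \zeta \in (0,1), and f : \mathbb{Z}_{>0} \to \mathbb{R} satisfy f(x) \leq x^{\zeta} for all x. Define t_j = a \cdot 2^{b+j} for j \geq 0, and let k be the minimal index with t_0 + t_1 + \cdots + t_k \geq S. If k \geq 1, then f(t_0) + f(t_1) + \cdots + f(t_k) \leq (2^{2\zeta}/(2^{\zeta} - 1)) \cdot S^{\zeta}. -/
/-! With `t_j = t_0 2^j` the powers `t_j^ζ = t_0^ζ (2^ζ)^j` form a geometric progression of ratio
`2^ζ > 1`, so their sum up to `k` is at most `2^ζ / (2^ζ - 1)` times its last term `t_k^ζ`.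
Minimality of `k` gives `t_{k-1} < S`, hence `t_k < 2S` and `t_k^ζ ≤ 2^ζ S^ζ`. -/

open Finset

lemma geom_sum_le_pow_div_sub_one {K : Type*} [Field K] [LinearOrder K] [IsStrictOrderedRing K]
    {q : K} (hq : 1 < q) (n : ℕ) : ∑ i ∈ range n, q ^ i ≤ q ^ n / (q - 1) := by
  rw [geom_sum_eq hq.ne']
  gcongr
  exact sub_le_self _ zero_le_one

lemma sum_rpow_mul_two_pow_le {x ζ : ℝ} (hx : 0 ≤ x) (hζ : 0 < ζ) (k : ℕ) :
    ∑ j ∈ range (k + 1), (x * 2 ^ j) ^ ζ ≤ 2 ^ ζ / (2 ^ ζ - 1) * (x * 2 ^ k) ^ ζ := by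
  set q : ℝ := 2 ^ ζ
  have hq : 1 < q := Real.one_lt_rpow one_lt_two hζ
  have hpow : ∀ j : ℕ, (x * 2 ^ j) ^ ζ = x ^ ζ * q ^ j := fun j => by
    rw [Real.mul_rpow hx (by positivity), Real.rpow_pow_comm zero_le_two]
  simp only [hpow, ← mul_sum]
  calc x ^ ζ * ∑ j ∈ range (k + 1), q ^ j ≤ x ^ ζ * (q ^ (k + 1) / (q - 1)) := by
        gcongr
        exact geom_sum_le_pow_div_sub_one hq _
    _ = q / (q - 1) * (x ^ ζ * q ^ k) := by ring

theorem stmt_6_general (a S : ℕ) (ha : 0 < a) (b : ℕ)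
    (ζ : ℝ) (hζ0 : 0 < ζ)
    (f : ℕ → ℝ) (hf : ∀ x : ℕ, 0 < x → f x ≤ (x : ℝ) ^ ζ)
    (t : ℕ → ℕ) (ht : ∀ j, t j = a * 2 ^ (b + j))
    (k : ℕ) (hk1 : 1 ≤ k)
    (hkmin : ∑ j ∈ Finset.range k, t j < S) :
    (∑ j ∈ Finset.range (k + 1), f (t j))
      ≤ (2 : ℝ) ^ (2 * ζ) / ((2 : ℝ) ^ ζ - 1) * (S : ℝ) ^ ζ := by
  have htj : ∀ j, (t j : ℝ) = t 0 * 2 ^ j := fun j => by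
    simp only [ht, pow_add, add_zero]
    push_cast
    ring
  have hlast : (t k : ℝ) ≤ 2 * S := by
    have hprev : t (k - 1) < S :=
      (single_le_sum (fun _ _ => Nat.zero_le _) (mem_range.2 (by omega))).trans_lt hkmin
    have hdouble : t k = 2 * t (k - 1) := by
      rw [ht, ht, ← mul_left_comm, ← pow_succ', show b + (k - 1) + 1 = b + k by omega]
    exact_mod_cast hdouble ▸ (by omega : 2 * t (k - 1) ≤ 2 * S)
  calc ∑ j ∈ range (k + 1), f (t j) ≤ ∑ j ∈ range (k + 1), ((t 0 : ℝ) * 2 ^ j) ^ ζ :=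
        sum_le_sum fun j _ => htj j ▸ hf _ (by rw [ht]; positivity)
    _ ≤ 2 ^ ζ / (2 ^ ζ - 1) * ((t 0 : ℝ) * 2 ^ k) ^ ζ :=
        sum_rpow_mul_two_pow_le (Nat.cast_nonneg _) hζ0 k
    _ ≤ 2 ^ ζ / (2 ^ ζ - 1) * (2 * S) ^ ζ := by
        have hq : (1 : ℝ) < 2 ^ ζ := Real.one_lt_rpow one_lt_two hζ0
        gcongr _ * ?_ ^ _
        exact htj k ▸ hlast
    _ = 2 ^ (2 * ζ) / (2 ^ ζ - 1) * (S : ℝ) ^ ζ := by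
        rw [Real.mul_rpow zero_le_two (Nat.cast_nonneg _), mul_comm 2 ζ, Real.rpow_mul zero_le_two,
          Real.rpow_two]
        ring

/-- Doubling trick: with `t_j = a·2^(b+j)`, `k ≥ 1` minimal such that
`t_0 + ⋯ + t_k ≥ S`, and `f x ≤ x^ζ` on positive integers,
`∑_{j=0}^k f(t_j) ≤ (2^{2ζ}/(2^ζ - 1))·S^ζ`. -/
theorem stmt_6 (a S : ℕ) (ha : 0 < a) (hS : 0 < S) (b : ℕ)
    (ζ : ℝ) (hζ0 : 0 < ζ) (hζ1 : ζ < 1)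
    (f : ℕ → ℝ) (hf : ∀ x : ℕ, 0 < x → f x ≤ (x : ℝ) ^ ζ)
    (t : ℕ → ℕ) (ht : ∀ j, t j = a * 2 ^ (b + j))
    (k : ℕ) (hk1 : 1 ≤ k)
    (hk : S ≤ ∑ j ∈ Finset.range (k + 1), t j)
    (hkmin : ∑ j ∈ Finset.range k, t j < S) :
    (∑ j ∈ Finset.range (k + 1), f (t j))
      ≤ (2 : ℝ) ^ (2 * ζ) / ((2 : ℝ) ^ ζ - 1) * (S : ℝ) ^ ζ :=
  stmt_6_general a S ha b ζ hζ0 f hf t ht k hk1 hkmin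
end
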